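/- Let ε > 0, 0 < g₁ ≤ g₂, 0 < δ̄ < c₁, τ > 0 with g₂·τ ≤ ε/(c₁ + 1)², and γ > 0. Let t_k = t₀ + k·τ, let g, δ : ℝ → ℝ be integrable on every bounded interval with g₁ ≤ g(s) ≤ g₂ and |δ(s)| ≤ δ̄ for all s ≥ t₀. Define recursively: u_k = −c₁·sign(x_k) if |x_k| > (c₁/(c₁+1))·ε, and u_k = −x_k/(ε − |x_k|) otherwise; and x_{k+1} = x_k + ∫_{t_k}^{t_{k+1}} g(s)·(δ(s) + u_k) ds. If |x₀| ≤ γ, then there exists a natural number l with l ≤ ⌊γ/(g₁·τ·(c₁ − δ̄))⌋ + 1 such that |x_k| ≤ (c₁/(c₁+1))·ε for all k ≥ l, and moreover limsup_{k→∞} |x_k| ≤ (δ̄/(δ̄+1))·ε. -/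

import Mathlib

/-!
Put `B = c₁ε/(c₁+1)` and `B₂ = δ̄ε/(δ̄+1)`: these are the points where the barrier gain
`y/(ε-y)` equals `c₁` and `δ̄`, so in particular the control is continuous at the switching
threshold `B`. The control is odd, so `|x_{k+1}| = ||x_k| + D_k|`, where `D_k` is the increment
`∫ g (±δ + u_k)` over one sampling period. Bounding the integrand pointwise, above `B` the value
`|x_k|` drops by `Δ = g₁τ(c₁-δ̄)` per step until it enters `[0, B]`, and from `[0, B]` the next
value is at most `max c (|x_k| - g₁τ(c/(ε-c) - δ̄))` for every `c ∈ [B₂, B]`. The sampling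
condition `g₂τ(c₁+1)² ≤ ε` is what keeps the overshoot past `0` within `B₂`. Iterating the
first estimate gives the reaching time, iterating the second with `c ↓ B₂` the lim sup.
-/

open MeasureTheory intervalIntegral Filter Set

noncomputable def barrierGain (ε y : ℝ) : ℝ := y / (ε - y)

noncomputable def barrierControl (c₁ ε x : ℝ) : ℝ :=
  if c₁ / (c₁ + 1) * ε < |x| then -c₁ * Real.sign x else -x / (ε - |x|)

section threshold

variable {ε d c₁ g₂ τ : ℝ}

theorem threshold_lt_self (hε : 0 < ε) (hd : 0 ≤ d) : d / (d + 1) * ε < ε :=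
  mul_lt_of_lt_one_left hε ((div_lt_one (by linarith)).2 (by linarith))

theorem threshold_strictMonoOn (hε : 0 < ε) :
    StrictMonoOn (fun d : ℝ => d / (d + 1) * ε) (Ici 0) := fun d hd d' hd' h =>
  mul_lt_mul_of_pos_right
    ((div_lt_div_iff₀ (by linarith [mem_Ici.1 hd]) (by linarith [mem_Ici.1 hd'])).2 (by linarith))
    hε

theorem mul_add_one_le_sub_threshold (hc₁ : 0 ≤ c₁) (hsamp : g₂ * τ ≤ ε / (c₁ + 1) ^ 2) :
    g₂ * τ * (c₁ + 1) ≤ ε - c₁ / (c₁ + 1) * ε := by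
  have hc₁' : 0 < c₁ + 1 := by linarith
  rw [le_div_iff₀ (by positivity)] at hsamp
  rw [← le_div_iff₀ hc₁']
  field_simp
  linarith

end threshold

section barrierGain

variable {ε y d : ℝ}

theorem barrierGain_threshold (hε : ε ≠ 0) (hd : 0 < d + 1) :
    barrierGain ε (d / (d + 1) * ε) = d := by
  rw [barrierGain]
  field_simp
  ring

theorem barrierGain_le_iff (hy : y < ε) (hd : 0 < d + 1) :
    barrierGain ε y ≤ d ↔ y ≤ d / (d + 1) * ε := by
  rw [barrierGain, div_le_iff₀ (sub_pos.2 hy), div_mul_eq_mul_div, le_div_iff₀ hd]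
  constructor <;> intro h <;> linarith

theorem lt_barrierGain_iff (hy : y < ε) (hd : 0 < d + 1) :
    d < barrierGain ε y ↔ d / (d + 1) * ε < y := by
  simpa only [not_le] using (barrierGain_le_iff hy hd).not

theorem le_barrierGain_iff (hy : y < ε) (hd : 0 < d + 1) :
    d ≤ barrierGain ε y ↔ d / (d + 1) * ε ≤ y := by
  rw [barrierGain, le_div_iff₀ (sub_pos.2 hy), div_mul_eq_mul_div, div_le_iff₀ hd]
  constructor <;> intro h <;> linarith

theorem barrierGain_nonneg (hy : 0 ≤ y) (hyε : y < ε) : 0 ≤ barrierGain ε y :=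
  div_nonneg hy (sub_pos.2 hyε).le

theorem barrierGain_mul_sub (hy : y < ε) : barrierGain ε y * (ε - y) = y :=
  div_mul_cancel₀ y (sub_pos.2 hy).ne'

theorem barrierGain_monotoneOn (hε : 0 ≤ ε) : MonotoneOn (barrierGain ε) (Iio ε) := by
  intro y hy z hz hyz
  rw [barrierGain, barrierGain, div_le_div_iff₀ (sub_pos.2 hy) (sub_pos.2 hz)]
  nlinarith

end barrierGain

section barrierControl

variable {c₁ ε x : ℝ}

theorem barrierControl_neg :
    barrierControl c₁ ε (-x) = -barrierControl c₁ ε x := by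
  unfold barrierControl
  rw [abs_neg, Real.sign_neg]
  split_ifs <;> ring

theorem barrierControl_of_lt (hx : 0 < x) (h : c₁ / (c₁ + 1) * ε < x) :
    barrierControl c₁ ε x = -c₁ := by
  rw [barrierControl, abs_of_pos hx, if_pos h, Real.sign_of_pos hx, mul_one]

theorem barrierControl_of_le (hx : 0 ≤ x) (h : x ≤ c₁ / (c₁ + 1) * ε) :
    barrierControl c₁ ε x = -barrierGain ε x := by
  rw [barrierControl, abs_of_nonneg hx, if_neg h.not_gt, barrierGain, neg_div]

end barrierControl

theorem IntervalIntegrable.mul_add_const {g δ : ℝ → ℝ} {a b C : ℝ} (hab : a ≤ b)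
    (hg : IntervalIntegrable g volume a b) (hδ : IntervalIntegrable δ volume a b)
    (hg_bd : ∀ s ∈ Icc a b, |g s| ≤ C) (u : ℝ) :
    IntervalIntegrable (fun s => g s * (δ s + u)) volume a b := by
  have hgδ : IntervalIntegrable (fun s => g s * δ s) volume a b := by
    rw [intervalIntegrable_iff_integrableOn_Ioc_of_le hab] at hg hδ ⊢
    refine hδ.bdd_mul (c := C) hg.aestronglyMeasurable ?_
    exact (ae_restrict_iff' measurableSet_Ioc).2
      (ae_of_all _ fun s hs => hg_bd s (Ioc_subset_Icc_self hs))
  simpa only [mul_add, mul_comm (g _) u] using hgδ.add (hg.const_mul u)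

/-- The bounds obeyed by the increment `D = ∫ g (δ + u)` over a sampling period of length `τ`
with constant input `u`, when `g₁ ≤ g ≤ g₂` and `|δ| ≤ δb` on that period. -/
def IncrementBounds (g₁ g₂ δb τ u D : ℝ) : Prop :=
  (δb + u ≤ 0 → D ≤ g₁ * τ * (δb + u)) ∧ (0 ≤ δb + u → D ≤ g₂ * τ * (δb + u)) ∧
    |D| ≤ g₂ * τ * (δb + |u|)

theorem incrementBounds_integral {g δ : ℝ → ℝ} {a τ g₁ g₂ δb : ℝ} (hg₁ : 0 ≤ g₁) (hτ : 0 ≤ τ)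
    (hg_int : IntervalIntegrable g volume a (a + τ))
    (hδ_int : IntervalIntegrable δ volume a (a + τ))
    (hg : ∀ s ∈ Icc a (a + τ), g₁ ≤ g s ∧ g s ≤ g₂)
    (hδ : ∀ s ∈ Icc a (a + τ), |δ s| ≤ δb) (u : ℝ) :
    IncrementBounds g₁ g₂ δb τ u (∫ s in a..a + τ, g s * (δ s + u)) := by
  have hab : a ≤ a + τ := le_add_of_nonneg_right hτ
  have hf := hg_int.mul_add_const hab hδ_int
    (fun s hs => abs_le.2 ⟨by linarith [hg s hs], (hg s hs).2⟩) u
  have integral_le : ∀ C, (∀ s ∈ Icc a (a + τ), g s * (δ s + u) ≤ C) →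
      ∫ s in a..a + τ, g s * (δ s + u) ≤ τ * C := fun C hC => by
    simpa using integral_mono_on hab hf intervalIntegrable_const hC
  refine ⟨fun hu => ?_, fun hu => ?_, ?_⟩
  · refine (integral_le (g₁ * (δb + u)) fun s hs => ?_).trans_eq (by ring)
    obtain ⟨hg₁s, -⟩ := hg s hs
    have := (abs_le.1 (hδ s hs)).2
    nlinarith
  · refine (integral_le (g₂ * (δb + u)) fun s hs => ?_).trans_eq (by ring)
    obtain ⟨hg₁s, hg₂s⟩ := hg s hs
    have := (abs_le.1 (hδ s hs)).2
    rcases le_total 0 (δ s + u) with h | h <;> nlinarith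
  · have h := norm_integral_le_of_norm_le_const (C := g₂ * (δb + |u|))
      (f := fun s => g s * (δ s + u)) (a := a) (b := a + τ) fun s hs => by
        rw [uIoc_of_le hab] at hs
        obtain ⟨hg₁s, hg₂s⟩ := hg s (Ioc_subset_Icc_self hs)
        rw [Real.norm_eq_abs, abs_mul, abs_of_nonneg (hg₁.trans hg₁s)]
        exact mul_le_mul hg₂s
          ((abs_add_le _ _).trans (by linarith [hδ s (Ioc_subset_Icc_self hs)]))
          (abs_nonneg _) (hg₁.trans (hg₁s.trans hg₂s))
    rw [Real.norm_eq_abs, add_sub_cancel_left, abs_of_nonneg hτ] at h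
    linarith

theorem exists_incrementBounds_abs_eq {g δ : ℝ → ℝ} {a τ g₁ g₂ δb c₁ ε x x' : ℝ}
    (hg₁ : 0 ≤ g₁) (hτ : 0 ≤ τ)
    (hg_int : IntervalIntegrable g volume a (a + τ))
    (hδ_int : IntervalIntegrable δ volume a (a + τ))
    (hg : ∀ s ∈ Icc a (a + τ), g₁ ≤ g s ∧ g s ≤ g₂)
    (hδ : ∀ s ∈ Icc a (a + τ), |δ s| ≤ δb)
    (hx' : x' = x + ∫ s in a..a + τ, g s * (δ s + barrierControl c₁ ε x)) :
    ∃ D, IncrementBounds g₁ g₂ δb τ (barrierControl c₁ ε |x|) D ∧ |x'| = |(|x| + D)| := by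
  rcases le_or_gt 0 x with hx | hx
  · exact ⟨_, incrementBounds_integral hg₁ hτ hg_int hδ_int hg hδ _,
      by rw [abs_of_nonneg hx, hx']⟩
  · refine ⟨_, incrementBounds_integral hg₁ hτ hg_int hδ_int.neg hg
      (fun s hs => (abs_neg (δ s)).trans_le (hδ s hs)) _, ?_⟩
    have hflip : (fun s => g s * ((-δ) s + barrierControl c₁ ε (-x))) =
        fun s => -(g s * (δ s + barrierControl c₁ ε x)) := by
      ext s; rw [barrierControl_neg, Pi.neg_apply]; ring
    rw [abs_of_neg hx, hflip, intervalIntegral.integral_neg, ← abs_neg x', hx', neg_add]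

namespace IncrementBounds

variable {ε g₁ g₂ δb c₁ τ y c D : ℝ}

theorem neg_threshold_le_add (hδb : 0 ≤ δb) (hgτ : 0 ≤ g₂ * τ) (hy : 0 ≤ y) (hyε : y < ε)
    (hq : g₂ * τ * (δb + 1) ≤ ε - y) (hD : IncrementBounds g₁ g₂ δb τ (-barrierGain ε y) D) :
    -(δb / (δb + 1) * ε) ≤ y + D := by
  have hv := barrierGain_nonneg hy hyε
  have hgain : g₂ * τ * barrierGain ε y ≤ y :=
    calc g₂ * τ * barrierGain ε y ≤ (ε - y) * barrierGain ε y :=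
          mul_le_mul_of_nonneg_right (by nlinarith) hv
      _ = y := by rw [mul_comm, barrierGain_mul_sub hyε]
  have hδ : g₂ * τ * δb ≤ δb / (δb + 1) * ε := by
    rw [div_mul_eq_mul_div, le_div_iff₀ (by linarith)]
    nlinarith
  have hD' := hD.2.2
  rw [abs_neg, abs_of_nonneg hv] at hD'
  linarith [neg_abs_le D]

theorem add_le_threshold (hδb : 0 ≤ δb) (hyε : y < ε) (hq : g₂ * τ * (δb + 1) ≤ ε - y)
    (hy : y ≤ δb / (δb + 1) * ε) (hD : IncrementBounds g₁ g₂ δb τ (-barrierGain ε y) D) :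
    y + D ≤ δb / (δb + 1) * ε := by
  have hv := (barrierGain_le_iff hyε (by linarith)).2 hy
  have hD' := hD.2.1 (by linarith)
  have key : (δb - barrierGain ε y) * (ε - y) = (δb + 1) * (δb / (δb + 1) * ε - y) := by
    rw [sub_mul, barrierGain_mul_sub hyε]
    field_simp
    ring
  suffices g₂ * τ * (δb - barrierGain ε y) ≤ δb / (δb + 1) * ε - y by linarith
  refine le_of_mul_le_mul_right ?_ (sub_pos.2 hyε)
  calc g₂ * τ * (δb - barrierGain ε y) * (ε - y)
      = g₂ * τ * (δb + 1) * (δb / (δb + 1) * ε - y) := by rw [mul_assoc, key]; ring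
    _ ≤ (ε - y) * (δb / (δb + 1) * ε - y) := mul_le_mul_of_nonneg_right hq (by linarith)
    _ = _ := mul_comm _ _

theorem abs_add_le_of_le (hε : 0 < ε) (hδb : 0 ≤ δb) (hδc : δb ≤ c₁) (hg₁τ : 0 ≤ g₁ * τ)
    (hgτ : 0 ≤ g₂ * τ) (hsamp : g₂ * τ * (c₁ + 1) ≤ ε - c₁ / (c₁ + 1) * ε)
    (hy : 0 ≤ y) (hyB : y ≤ c₁ / (c₁ + 1) * ε) (hc : δb / (δb + 1) * ε ≤ c)
    (hcB : c ≤ c₁ / (c₁ + 1) * ε)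
    (hD : IncrementBounds g₁ g₂ δb τ (barrierControl c₁ ε y) D) :
    |y + D| ≤ max c (y - g₁ * τ * (barrierGain ε c - δb)) := by
  have hBε := threshold_lt_self hε (hδb.trans hδc)
  have hyε : y < ε := hyB.trans_lt hBε
  rw [barrierControl_of_le hy hyB] at hD
  have hq : g₂ * τ * (δb + 1) ≤ ε - y := by
    nlinarith [mul_le_mul_of_nonneg_left (add_le_add_right hδc 1) hgτ]
  refine abs_le.2 ⟨?_, ?_⟩
  · linarith [hD.neg_threshold_le_add hδb hgτ hy hyε hq,
      le_max_left c (y - g₁ * τ * (barrierGain ε c - δb))]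
  rcases le_total y (δb / (δb + 1) * ε) with hy₂ | hy₂
  · exact (hD.add_le_threshold hδb hyε hq hy₂).trans (hc.trans (le_max_left _ _))
  have hv := (le_barrierGain_iff hyε (by linarith)).2 hy₂
  have hD' : D ≤ g₁ * τ * (δb - barrierGain ε y) := by
    simpa only [sub_eq_add_neg] using hD.1 (by linarith)
  rcases le_total y c with hyc | hcy
  · refine le_max_of_le_left ?_
    nlinarith
  · have hmono := barrierGain_monotoneOn hε.le (hcB.trans_lt hBε) hyε hcy
    refine le_max_of_le_right ?_
    nlinarith

theorem abs_add_le_of_lt (hε : 0 < ε) (hδb : 0 ≤ δb) (hδc : δb ≤ c₁)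
    (hsamp : g₂ * τ * (c₁ + 1) ≤ ε - c₁ / (c₁ + 1) * ε) (hy : c₁ / (c₁ + 1) * ε < y)
    (hD : IncrementBounds g₁ g₂ δb τ (barrierControl c₁ ε y) D) :
    |y + D| ≤ max (c₁ / (c₁ + 1) * ε) (y - g₁ * τ * (c₁ - δb)) := by
  have hc₁ : 0 ≤ c₁ := hδb.trans hδc
  have hB : 0 ≤ c₁ / (c₁ + 1) * ε := by positivity
  rw [barrierControl_of_lt (hB.trans_lt hy) hy] at hD
  have hD₁ : D ≤ g₁ * τ * (δb - c₁) := hD.1 (by linarith)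
  have hD₂ := hD.2.2
  rw [abs_neg, abs_of_nonneg hc₁] at hD₂
  have hBid : c₁ / (c₁ + 1) * ε = c₁ * (ε - c₁ / (c₁ + 1) * ε) := by field_simp; ring
  refine abs_le.2 ⟨?_, ?_⟩
  · nlinarith [neg_abs_le D, le_max_left (c₁ / (c₁ + 1) * ε) (y - g₁ * τ * (c₁ - δb))]
  · exact le_max_of_le_right (by linarith)

theorem abs_add_le (hε : 0 < ε) (hδb : 0 ≤ δb) (hδc : δb ≤ c₁) (hg₁τ : 0 ≤ g₁ * τ)
    (hgτ : 0 ≤ g₂ * τ) (hsamp : g₂ * τ * (c₁ + 1) ≤ ε - c₁ / (c₁ + 1) * ε) (hy : 0 ≤ y)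
    (hD : IncrementBounds g₁ g₂ δb τ (barrierControl c₁ ε y) D) :
    |y + D| ≤ max (c₁ / (c₁ + 1) * ε) (y - g₁ * τ * (c₁ - δb)) := by
  rcases lt_or_ge (c₁ / (c₁ + 1) * ε) y with h | h
  · exact hD.abs_add_le_of_lt hε hδb hδc hsamp h
  · simpa only [barrierGain_threshold hε.ne' (by linarith : 0 < c₁ + 1)] using
      hD.abs_add_le_of_le hε hδb hδc hg₁τ hgτ hsamp hy h
        ((threshold_strictMonoOn hε).monotoneOn hδb (hδb.trans hδc) hδc) le_rfl

end IncrementBounds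

section sequences

variable {y : ℕ → ℝ} {c ρ : ℝ} {N : ℕ}

theorem le_max_sub_mul_of_le_max_sub (hρ : 0 ≤ ρ) (h : ∀ k ≥ N, y (k + 1) ≤ max c (y k - ρ))
    (n : ℕ) : y (N + n) ≤ max c (y N - n * ρ) := by
  induction n with
  | zero => simp
  | succ n ih =>
    calc y (N + (n + 1)) ≤ max c (y (N + n) - ρ) := h _ (Nat.le_add_right N n)
      _ ≤ max c (max c (y N - n * ρ) - ρ) := by gcongr
      _ ≤ max c (y N - (n + 1 : ℕ) * ρ) := by
        rw [← max_sub_sub_right, Nat.cast_succ, add_one_mul, ← sub_sub]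
        exact max_le (le_max_left _ _) (max_le_max (by linarith) le_rfl)

theorem le_of_le_max_sub_of_floor_lt {γ : ℝ} (hc : 0 ≤ c) (hρ : 0 < ρ)
    (h : ∀ k, y (k + 1) ≤ max c (y k - ρ)) (hy₀ : y 0 ≤ γ) {k : ℕ} (hk : ⌊γ / ρ⌋₊ + 1 ≤ k) :
    y k ≤ c := by
  have hγ : γ < k * ρ := by
    rw [← div_lt_iff₀ hρ]
    exact (Nat.lt_floor_add_one _).trans_le (by exact_mod_cast hk)
  have := le_max_sub_mul_of_le_max_sub (N := 0) hρ.le (fun k _ => h k) k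
  rw [zero_add] at this
  exact this.trans (max_le le_rfl (by linarith))

theorem eventually_le_of_le_max_sub (hρ : 0 < ρ) (h : ∀ k ≥ N, y (k + 1) ≤ max c (y k - ρ)) :
    ∀ᶠ k in atTop, y k ≤ c := by
  obtain ⟨n, hn⟩ := exists_nat_ge ((y N - c) / ρ)
  rw [div_le_iff₀ hρ] at hn
  refine eventually_atTop.2 ⟨N + n, fun k hk => ?_⟩
  obtain ⟨m, rfl⟩ := Nat.exists_eq_add_of_le (le_trans (Nat.le_add_right N n) hk)
  have hnm : (n : ℝ) ≤ m := by exact_mod_cast (Nat.add_le_add_iff_left.1 hk)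
  refine (le_max_sub_mul_of_le_max_sub hρ.le h m).trans (max_le le_rfl ?_)
  nlinarith

theorem limsup_le_of_forall_eventually_le {b B : ℝ} (hbB : b < B) (hy : ∀ k, 0 ≤ y k)
    (h : ∀ c, b < c → c ≤ B → ∀ᶠ k in atTop, y k ≤ c) : limsup y atTop ≤ b :=
  le_of_forall_gt_imp_ge_of_dense fun _ hc =>
    (limsup_le_of_le (isCoboundedUnder_le_of_le atTop hy)
      (h _ (lt_min hc hbB) (min_le_right _ _))).trans (min_le_left _ _)

end sequences

theorem stmt_14_general (ε g₁ g₂ δb c₁ τ t₀ γ : ℝ)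
    (hε : 0 < ε) (hg₁ : 0 < g₁) (hg₁₂ : g₁ ≤ g₂)
    (hδb : 0 < δb) (hδc : δb < c₁) (hτ : 0 < τ)
    (hsamp : g₂ * τ ≤ ε / (c₁ + 1) ^ 2)
    (g δ : ℝ → ℝ)
    (hg_int : ∀ a b : ℝ, IntervalIntegrable g volume a b)
    (hδ_int : ∀ a b : ℝ, IntervalIntegrable δ volume a b)
    (hg_bd : ∀ s : ℝ, t₀ ≤ s → g₁ ≤ g s ∧ g s ≤ g₂)
    (hδ_bd : ∀ s : ℝ, t₀ ≤ s → |δ s| ≤ δb)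
    (x u : ℕ → ℝ)
    (hu : ∀ k, u k = if (c₁ / (c₁ + 1)) * ε < |x k|
      then -c₁ * Real.sign (x k)
      else -(x k) / (ε - |x k|))
    (hx : ∀ k : ℕ, x (k + 1) =
      x k + ∫ s in (t₀ + (k : ℝ) * τ)..(t₀ + ((k : ℝ) + 1) * τ), g s * (δ s + u k))
    (hx₀ : |x 0| ≤ γ) :
    (∃ l : ℕ, l ≤ ⌊γ / (g₁ * τ * (c₁ - δb))⌋₊ + 1 ∧
      ∀ k : ℕ, l ≤ k → |x k| ≤ (c₁ / (c₁ + 1)) * ε) ∧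
    limsup (fun k : ℕ => |x k|) atTop ≤ (δb / (δb + 1)) * ε := by
  have hc₁ : 0 ≤ c₁ := hδb.le.trans hδc.le
  have hg₁τ : 0 ≤ g₁ * τ := by positivity
  have hg₂τ : 0 ≤ g₂ * τ := mul_nonneg (hg₁.le.trans hg₁₂) hτ.le
  have hsamp' := mul_add_one_le_sub_threshold hc₁ hsamp
  have hstep : ∀ k, ∃ D, IncrementBounds g₁ g₂ δb τ (barrierControl c₁ ε |x k|) D ∧
      |x (k + 1)| = |(|x k| + D)| := fun k => by
    have ht : t₀ ≤ t₀ + k * τ := le_add_of_nonneg_right (by positivity)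
    refine exists_incrementBounds_abs_eq hg₁.le hτ.le (hg_int _ _) (hδ_int _ _)
      (fun s hs => hg_bd s (ht.trans hs.1)) (fun s hs => hδ_bd s (ht.trans hs.1)) ?_
    rw [hx k, hu k, add_one_mul, ← add_assoc]
    rfl
  have hreached := fun k => le_of_le_max_sub_of_floor_lt (y := fun k => |x k|)
    (c := c₁ / (c₁ + 1) * ε) (by positivity) (mul_pos (mul_pos hg₁ hτ) (sub_pos.2 hδc)) (fun k => by
      obtain ⟨D, hD, hxD⟩ := hstep k
      exact hxD ▸ hD.abs_add_le hε hδb.le hδc.le hg₁τ hg₂τ hsamp' (abs_nonneg _)) hx₀ (k := k)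
  refine ⟨⟨_, le_rfl, hreached⟩, limsup_le_of_forall_eventually_le
    (threshold_strictMonoOn hε hδb.le hc₁ hδc) (fun k => abs_nonneg _) fun c hc hcB => ?_⟩
  have hgain : δb < barrierGain ε c :=
    (lt_barrierGain_iff (hcB.trans_lt (threshold_lt_self hε hc₁)) (by linarith)).2 hc
  refine eventually_le_of_le_max_sub (N := ⌊γ / (g₁ * τ * (c₁ - δb))⌋₊ + 1)
    (mul_pos (mul_pos hg₁ hτ) (sub_pos.2 hgain)) fun k hk => ?_
  obtain ⟨D, hD, hxD⟩ := hstep k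
  exact hxD ▸ hD.abs_add_le_of_le hε hδb.le hδc.le hg₁τ hg₂τ hsamp' (abs_nonneg _)
    (hreached k hk) hc.le hcB

/-- Theorem 2: finite-sample reaching and invariance for the modified
barrier-function adaptive controller, eq. (7): starting from `|x₀| ≤ γ`, after at
most `⌊γ/(g₁τ(c₁-δ̄))⌋ + 1` samples the trajectory enters (and stays in)
Div 3 ∪ Div 4 = {x : |x| ≤ (c₁/(c₁+1))ε}, and `limsup |x_k| ≤ (δ̄/(δ̄+1))ε`. -/
theorem stmt_14 (ε g₁ g₂ δb c₁ τ t₀ γ : ℝ)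
    (hε : 0 < ε) (hg₁ : 0 < g₁) (hg₁₂ : g₁ ≤ g₂)
    (hδb : 0 < δb) (hδc : δb < c₁) (hτ : 0 < τ)
    (hsamp : g₂ * τ ≤ ε / (c₁ + 1) ^ 2) (hγ : 0 < γ)
    (g δ : ℝ → ℝ)
    (hg_int : ∀ a b : ℝ, IntervalIntegrable g volume a b)
    (hδ_int : ∀ a b : ℝ, IntervalIntegrable δ volume a b)
    (hg_bd : ∀ s : ℝ, t₀ ≤ s → g₁ ≤ g s ∧ g s ≤ g₂)
    (hδ_bd : ∀ s : ℝ, t₀ ≤ s → |δ s| ≤ δb)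
    (x u : ℕ → ℝ)
    (hu : ∀ k, u k = if (c₁ / (c₁ + 1)) * ε < |x k|
      then -c₁ * Real.sign (x k)
      else -(x k) / (ε - |x k|))
    (hx : ∀ k : ℕ, x (k + 1) =
      x k + ∫ s in (t₀ + (k : ℝ) * τ)..(t₀ + ((k : ℝ) + 1) * τ), g s * (δ s + u k))
    (hx₀ : |x 0| ≤ γ) :
    (∃ l : ℕ, l ≤ ⌊γ / (g₁ * τ * (c₁ - δb))⌋₊ + 1 ∧
      ∀ k : ℕ, l ≤ k → |x k| ≤ (c₁ / (c₁ + 1)) * ε) ∧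
    limsup (fun k : ℕ => |x k|) atTop ≤ (δb / (δb + 1)) * ε :=
  stmt_14_general ε g₁ g₂ δb c₁ τ t₀ γ hε hg₁ hg₁₂ hδb hδc hτ hsamp g δ hg_int hδ_int hg_bd hδ_bd x
    u hu hx hx₀
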